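/- arXiv:1209.4053 — 2 statements merged into one kernel-verified Lean document; each statement's English description precedes it below -/
import Mathlib

section
/- Let f_1,…,f_N : ℝ^m → ℝ be continuous functions each differentiable at x*, let G(y) = min_{1 ≤ l ≤ N} f_l(y), and let L(x*) = {l : f_l(x*) = G(x*)}. If x* is a local maximum of G, then 0 lies in the convex hull of the finite set of active gradients {∇f_l(x*) : l ∈ L(x*)}. -/
/-!
If `0` is not in the convex hull of the active gradients, a separating hyperplane gives a
direction `v` with `⟪∇f_l(x*), v⟫ > 0` for every active `l`. Along `x* + t v`, `t > 0` small,
every active `f_l` then rises above `G(x*)`, and every inactive one stays above it by continuity,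
so `G(x* + t v) > G(x*)`, contradicting maximality.
-/

open Filter Topology
open scoped RealInnerProductSpace

theorem exists_forall_inner_pos_of_zero_notMem_convexHull {E : Type*} [NormedAddCommGroup E]
    [InnerProductSpace ℝ E] [CompleteSpace E] {S : Set E} (hS : S.Finite)
    (h : (0 : E) ∉ convexHull ℝ S) : ∃ v : E, ∀ s ∈ S, 0 < ⟪s, v⟫ := by
  obtain ⟨φ, u, hu0, hu⟩ := geometric_hahn_banach_point_closed (convex_convexHull ℝ S)
    (hS.isCompact_convexHull (𝕜 := ℝ)).isClosed h
  refine ⟨(InnerProductSpace.toDual ℝ E).symm φ, fun s hs => ?_⟩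
  rw [real_inner_comm, InnerProductSpace.toDual_symm_apply]
  exact (map_zero φ ▸ hu0).trans (hu s (subset_convexHull ℝ S hs))

theorem HasDerivAt.eventually_lt_of_pos {g : ℝ → ℝ} {g' x : ℝ} (hg : HasDerivAt g g' x)
    (hpos : 0 < g') : ∀ᶠ t in 𝓝[>] x, g x < g t := by
  have hslope := (hasDerivWithinAt_iff_tendsto_slope' Set.self_notMem_Ioi).1 hg.hasDerivWithinAt
  filter_upwards [hslope.eventually (eventually_gt_nhds hpos), self_mem_nhdsWithin] with t ht hxt
  exact (slope_pos_iff_of_le (le_of_lt hxt)).1 ht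

theorem HasFDerivAt.eventually_lt_add_smul {E : Type*} [NormedAddCommGroup E] [NormedSpace ℝ E]
    {f : E → ℝ} {f' : E →L[ℝ] ℝ} {x v : E} (hf : HasFDerivAt f f' x) (hv : 0 < f' v) :
    ∀ᶠ t in 𝓝[>] (0 : ℝ), f x < f (x + t • v) := by
  have hline : HasDerivAt (fun t : ℝ => x + t • v) v 0 :=
    ((hasDerivAt_id 0).smul_const v).const_add x |>.congr_deriv (one_smul ℝ v)
  have hcomp := (by simpa using hf : HasFDerivAt f f' (x + (0 : ℝ) • v)).comp_hasDerivAt 0 hline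
  simpa using hcomp.eventually_lt_of_pos hv

theorem HasGradientAt.eventually_lt_add_smul {E : Type*} [NormedAddCommGroup E]
    [InnerProductSpace ℝ E] [CompleteSpace E] {f : E → ℝ} {g x v : E} (hf : HasGradientAt f g x)
    (hv : 0 < ⟪g, v⟫) : ∀ᶠ t in 𝓝[>] (0 : ℝ), f x < f (x + t • v) :=
  hf.hasFDerivAt.eventually_lt_add_smul (by simpa using hv)

theorem zero_mem_convexHull_active_gradients_general (m N : ℕ) (hN : 1 ≤ N)
    (f : Fin N → EuclideanSpace ℝ (Fin m) → ℝ)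
    (xs : EuclideanSpace ℝ (Fin m))
    (hdiff : ∀ l, DifferentiableAt ℝ (f l) xs)
    (hmax : IsLocalMax (fun y => ⨅ l, f l y) xs) :
    (0 : EuclideanSpace ℝ (Fin m)) ∈ convexHull ℝ
      ((fun l => gradient (f l) xs) '' {l : Fin N | f l xs = ⨅ l', f l' xs}) := by
  have : Nonempty (Fin N) := ⟨⟨0, hN⟩⟩
  by_contra hnot
  obtain ⟨v, hv⟩ :=
    exists_forall_inner_pos_of_zero_notMem_convexHull ((Set.toFinite _).image _) hnot
  have hline : Tendsto (fun t : ℝ => xs + t • v) (𝓝[>] 0) (𝓝 xs) := by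
    have hcont : Continuous fun t : ℝ => xs + t • v := by fun_prop
    simpa using (hcont.tendsto 0).mono_left nhdsWithin_le_nhds
  have hrise : ∀ l, ∀ᶠ t in 𝓝[>] (0 : ℝ), (⨅ l', f l' xs) < f l (xs + t • v) := by
    intro l
    rcases (ciInf_le (Finite.bddBelow_range fun l' => f l' xs) l).eq_or_lt with
      hactive | hinactive
    · rw [hactive]
      exact (hdiff l).hasGradientAt.eventually_lt_add_smul (hv _ ⟨l, hactive.symm, rfl⟩)
    · exact ((hdiff l).continuousAt.tendsto.comp hline).eventually (lt_mem_nhds hinactive)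
  obtain ⟨t, hlt, hle⟩ := ((eventually_all.2 hrise).and (hline.eventually hmax)).exists
  obtain ⟨l, hl⟩ := exists_eq_ciInf_of_finite (f := fun l => f l (xs + t • v))
  exact (hle.trans_lt (hlt l)).ne hl.symm

/-- If `x*` is a local maximum of `G(y) = min_l f_l(y)` with each `f_l` continuous and
differentiable at `x*`, then `0` lies in the convex hull of the active gradients. -/
theorem zero_mem_convexHull_active_gradients (m N : ℕ) (hN : 1 ≤ N)
    (f : Fin N → EuclideanSpace ℝ (Fin m) → ℝ)
    (hc : ∀ l, Continuous (f l)) (xs : EuclideanSpace ℝ (Fin m))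
    (hdiff : ∀ l, DifferentiableAt ℝ (f l) xs)
    (hmax : IsLocalMax (fun y => ⨅ l, f l y) xs) :
    (0 : EuclideanSpace ℝ (Fin m)) ∈ convexHull ℝ
      ((fun l => gradient (f l) xs) '' {l : Fin N | f l xs = ⨅ l', f l' xs}) :=
  zero_mem_convexHull_active_gradients_general m N hN f xs hdiff hmax
end

section
/- Every subset of the family F can be active at at most one local maximal value of G: if x and x' are local maxima of the maximal radius function G with G(x) > 0, G(x') > 0 and with equal active index sets L(x) = L(x'), then G(x) = G(x'). -/
open scoped BigOperators

/-- Euclidean distance between the `i`-th and `j`-th blocks of a configuration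
`x ∈ ℝ^{dn}` of `n` points in `ℝ^d`. -/
noncomputable def pairDist (n d : ℕ) (x : EuclideanSpace ℝ (Fin n × Fin d))
    (i j : Fin n) : ℝ :=
  Real.sqrt (∑ k : Fin d, (x (i, k) - x (j, k)) ^ 2)

/-- Index set for the family `F`: pairs `i < j` (functions `φ_{ij}`), together with
two copies of `Fin n × Fin d` (functions `ψ_{ik}` and `ψ^{ik}`). -/
def Idx (n d : ℕ) : Type :=
  {p : Fin n × Fin n // p.1 < p.2} ⊕ ((Fin n × Fin d) ⊕ (Fin n × Fin d))

/-- The family `F` of functions: `φ_{ij}(x) = |x_i - x_j|/2`, `ψ_{ik}(x) = x_{ik}`,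
`ψ^{ik}(x) = 1 - x_{ik}`. -/
noncomputable def famF (n d : ℕ) : Idx n d → EuclideanSpace ℝ (Fin n × Fin d) → ℝ
  | Sum.inl p => fun x => pairDist n d x p.1.1 p.1.2 / 2
  | Sum.inr (Sum.inl q) => fun x => x q
  | Sum.inr (Sum.inr q) => fun x => 1 - x q

/-- The maximal radius function `G(x) = min_{f ∈ F} f(x)`. -/
noncomputable def maxRad (n d : ℕ) (x : EuclideanSpace ℝ (Fin n × Fin d)) : ℝ :=
  ⨅ l : Idx n d, famF n d l x

/-- `x` is an `r`-admissible configuration: pairwise distances at least `2r` and all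
coordinates in `[r, 1-r]`. `M_n^d(r)` is the set of `r`-admissible configurations. -/
def Admissible (n d : ℕ) (r : ℝ) (x : EuclideanSpace ℝ (Fin n × Fin d)) : Prop :=
  (∀ i j : Fin n, i ≠ j → 2 * r ≤ pairDist n d x i j) ∧
  ∀ q : Fin n × Fin d, r ≤ x q ∧ x q ≤ 1 - r

/-!
Every member of `F` is convex and continuous, and `G` is their minimum. Suppose `x` is a local
maximum of `G` and every function active at `x` is also active at `x'`, but `G x' < G x`. Move
from `x` away from `x'`, to `x + t • (x - x')` with small `t > 0`. By convexity an active `f`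
satisfies `f (x + t • (x - x')) ≥ G x + t * (G x - G x') > G x`, while the inactive ones stay
above `G x` by continuity; so `G` increases strictly, contradicting local maximality. Applying
this in both directions gives `G x = G x'`.
-/

open Filter Set Topology

section ConvexExtrapolation

variable {E : Type*} [AddCommGroup E] [Module ℝ E]

theorem ConvexOn.add_mul_sub_le_apply_add_smul_sub {g : E → ℝ} (hg : ConvexOn ℝ univ g)
    (x x' : E) {t : ℝ} (ht : 0 ≤ t) :
    g x + t * (g x - g x') ≤ g (x + t • (x - x')) := by
  have h1t : 0 < 1 + t := by linarith
  have hcomb : (1 / (1 + t)) • (x + t • (x - x')) + (t / (1 + t)) • x' = x := by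
    match_scalars <;> field_simp; ring
  have hconv : g ((1 / (1 + t)) • (x + t • (x - x')) + (t / (1 + t)) • x')
      ≤ (1 / (1 + t)) • g (x + t • (x - x')) + (t / (1 + t)) • g x' :=
    hg.2 (mem_univ _) (mem_univ _) (by positivity) (by positivity) (by field_simp)
  rw [hcomb, smul_eq_mul, smul_eq_mul, div_mul_eq_mul_div, div_mul_eq_mul_div,
    ← add_div, le_div_iff₀ h1t] at hconv
  linarith

end ConvexExtrapolation

section ActiveSet

variable {E ι : Type*} [TopologicalSpace E] [AddCommGroup E] [Module ℝ E]
  [IsTopologicalAddGroup E] [ContinuousSMul ℝ E] [Finite ι]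

theorem IsLocalMax.iInf_le_iInf_of_active_imp {f : ι → E → ℝ}
    (hconv : ∀ i, ConvexOn ℝ univ (f i)) (hcont : ∀ i, Continuous (f i)) {x x' : E}
    (hx : IsLocalMax (fun z => ⨅ i, f i z) x)
    (hact : ∀ i, f i x = ⨅ j, f j x → f i x' = ⨅ j, f j x') :
    ⨅ i, f i x ≤ ⨅ i, f i x' := by
  by_contra! hlt
  set r := ⨅ i, f i x
  set r' := ⨅ i, f i x'
  rcases isEmpty_or_nonempty ι with hι | hι
  · simp [r, r'] at hlt -- an empty infimum is the junk value `0` in `ℝ`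
  let ray : ℝ → E := fun t => x + t • (x - x')
  have hray : Tendsto ray (𝓝[>] 0) (𝓝 x) := by
    have : Continuous ray := by fun_prop
    simpa [ray] using (this.tendsto 0).mono_left nhdsWithin_le_nhds
  have habove : ∀ᶠ t in 𝓝[>] 0, ∀ i, r < f i (ray t) := by
    rw [eventually_all]
    intro i
    by_cases hi : f i x = r
    · filter_upwards [self_mem_nhdsWithin] with t (ht : 0 < t)
      have := (hconv i).add_mul_sub_le_apply_add_smul_sub x x' ht.le
      rw [hi, hact i hi] at this
      nlinarith
    · have : r < f i x := lt_of_le_of_ne (ciInf_le (finite_range _).bddBelow i) (Ne.symm hi)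
      exact ((hcont i).tendsto x |>.comp hray).eventually (lt_mem_nhds this)
  obtain ⟨t, hgt, hle⟩ := (habove.and (hray.eventually hx)).exists
  obtain ⟨i, hi⟩ := exists_eq_ciInf_of_finite (f := fun i => f i (ray t))
  exact (hgt i).not_ge (hi ▸ hle)

end ActiveSet

/-- The map `x ↦ x_i - x_j` from configurations to `ℝ^d`. -/
noncomputable def pointSub (n d : ℕ) (i j : Fin n) :
    EuclideanSpace ℝ (Fin n × Fin d) →L[ℝ] EuclideanSpace ℝ (Fin d) :=
  (PiLp.continuousLinearEquiv 2 ℝ fun _ : Fin d => ℝ).symm.toContinuousLinearMap.comp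
    (ContinuousLinearMap.pi fun k => EuclideanSpace.proj (i, k) - EuclideanSpace.proj (j, k))

theorem pairDist_eq_norm_pointSub (n d : ℕ) (x : EuclideanSpace ℝ (Fin n × Fin d))
    (i j : Fin n) : pairDist n d x i j = ‖pointSub n d i j x‖ := by
  simp [pairDist, pointSub, EuclideanSpace.norm_eq]

instance (n d : ℕ) : Finite (Idx n d) := by
  unfold Idx; infer_instance

theorem convexOn_famF (n d : ℕ) (l : Idx n d) : ConvexOn ℝ univ (famF n d l) := by
  rcases l with p | q | q
  · simp only [famF, pairDist_eq_norm_pointSub, div_eq_inv_mul]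
    exact ((convexOn_norm convex_univ).comp_linearMap (pointSub n d p.1.1 p.1.2).toLinearMap).smul
      (by norm_num)
  · exact (EuclideanSpace.proj q).toLinearMap.convexOn convex_univ
  · exact ((convexOn_const 1 convex_univ).sub
      ((EuclideanSpace.proj q).toLinearMap.concaveOn convex_univ))

theorem continuous_famF (n d : ℕ) (l : Idx n d) : Continuous (famF n d l) := by
  rcases l with p | q | q
  · simp only [famF, pairDist_eq_norm_pointSub]
    fun_prop
  · exact (EuclideanSpace.proj q).continuous
  · exact continuous_const.sub (EuclideanSpace.proj q).continuous

theorem active_set_determines_value_general (n d : ℕ)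
    (x x' : EuclideanSpace ℝ (Fin n × Fin d))
    (hx : IsLocalMax (maxRad n d) x) (hx' : IsLocalMax (maxRad n d) x')
    (hactive : {l : Idx n d | famF n d l x = maxRad n d x}
      = {l : Idx n d | famF n d l x' = maxRad n d x'}) :
    maxRad n d x = maxRad n d x' := by
  have hact l : famF n d l x = maxRad n d x ↔ famF n d l x' = maxRad n d x' :=
    Set.ext_iff.mp hactive l
  exact le_antisymm
    (hx.iInf_le_iInf_of_active_imp (convexOn_famF n d) (continuous_famF n d) fun l => (hact l).1)
    (hx'.iInf_le_iInf_of_active_imp (convexOn_famF n d) (continuous_famF n d) fun l => (hact l).2)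

/-- Every subset of the family `F` can be active at at most one local maximal value
of `G`: two local maxima with positive value and equal active index sets have equal
values. -/
theorem active_set_determines_value (n d : ℕ) (hn : 2 ≤ n) (hd : 2 ≤ d)
    (x x' : EuclideanSpace ℝ (Fin n × Fin d))
    (hx : IsLocalMax (maxRad n d) x) (hx' : IsLocalMax (maxRad n d) x')
    (hpos : 0 < maxRad n d x) (hpos' : 0 < maxRad n d x')
    (hactive : {l : Idx n d | famF n d l x = maxRad n d x}
      = {l : Idx n d | famF n d l x' = maxRad n d x'}) :
    maxRad n d x = maxRad n d x' :=
  active_set_determines_value_general n d x x' hx hx' hactive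
end
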